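/- Let a, b ∈ ℚ, let Q = 1 + 2a·x + b·x² ∈ ℚ[[x]], and define F = -x·Q⁻¹·(c∘(b·x²·Q⁻²)) and G = Q⁻¹·(c∘(b·x²·Q⁻²)) = -F/x, where c is the Catalan generating function (note b·x²·Q⁻² has zero constant term, so the substitution is defined). Then F∘F = x and G·(G∘F) = 1. In particular the Riordan arrays (1, F) and (G, F) are Riordan involutions; the latter is the involution defined by the orthogonal polynomial coefficient array (1/(1+ax+bx²), x/(1+ax+bx²)). -/

import Mathlib

open PowerSeries Finset

/-- Substitution `f ∘ h` of a power series `h` (intended to have zero constant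
term) into a power series `f`: the coefficient of `xⁿ` is
`∑_{k=0}^{n} f_k · [xⁿ](hᵏ)`. -/
noncomputable def PowerSeries.comp {R : Type*} [CommSemiring R]
    (f h : PowerSeries R) : PowerSeries R :=
  PowerSeries.mk fun n => ∑ k ∈ Finset.range (n + 1),
    (PowerSeries.coeff k f) * (PowerSeries.coeff n (h ^ k))

/-!
Substituting a series with zero constant term is a ring homomorphism. The Catalan equation
`c = 1 + x c²` turns into `g = 1 + b F²` for `g = c(b x² Q⁻²) = -Q F / x`, which after clearing
`Q` is the relation `x + F + 2a x F + b x F (x + F) = 0`. This relation is symmetric in `x` and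
`F`; substituting `F` into it and subtracting the original gives `(F∘F - x) · U = 0` with `U` of
constant term `1`, hence `F∘F = x`. Finally `G = -F/x`, and substituting `F` into `F = -x G`
gives `x = F∘F = -F · (G∘F) = x G (G∘F)`.
-/

namespace PowerSeries

variable {R : Type*} [CommRing R]

theorem comp_eq_subst {h : R⟦X⟧} (h0 : constantCoeff h = 0) (f : R⟦X⟧) :
    f.comp h = f.subst h := by
  ext n
  have hsupp : (Function.support fun d ↦ coeff d f • coeff n (h ^ d)) ⊆ ↑(range (n + 1)) := by
    intro d hd
    by_contra hdn
    refine hd ?_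
    have hlt : (n : ℕ∞) < (h ^ d).order :=
      lt_of_lt_of_le (by simpa using hdn) (le_order_pow_of_constantCoeff_eq_zero d h0)
    simp [coeff_of_lt_order n hlt]
  rw [coeff_subst' (HasSubst.of_constantCoeff_zero' h0),
    finsum_eq_sum_of_support_subset _ hsupp, comp, coeff_mk]
  rfl

theorem subst_self_eq_X_of_symmetric_relation {F : R⟦X⟧} (hF0 : constantCoeff F = 0) (α β : R)
    (hrel : X + F + X * F * (C α + C β * (X + F)) = 0) :
    F.subst F = X := by
  have hF := HasSubst.of_constantCoeff_zero' hF0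
  set Y : R⟦X⟧ := F.subst F
  have hrelY : F + Y + F * Y * (C α + C β * (F + Y)) = 0 := by
    have := congrArg (substAlgHom hF (R := R)) hrel
    simp only [map_add, map_mul, map_zero, substAlgHom_X] at this
    rwa [coe_substAlgHom, subst_C, subst_C] at this
  have hunit : IsUnit (1 + F * (C α + C β * (F + X + Y))) := by
    simp [isUnit_iff_constantCoeff, hF0]
  have hfactor : (Y - X) * (1 + F * (C α + C β * (F + X + Y))) = 0 := by
    linear_combination hrelY - hrel
  exact sub_eq_zero.mp (hunit.mul_left_eq_zero.mp hfactor)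

theorem mul_subst_eq_one_of_eq_neg_X_mul {F G : R⟦X⟧} (hF0 : constantCoeff F = 0)
    (hFG : F = -(X * G)) (hinv : F.subst F = X) :
    G * G.subst F = 1 := by
  have hF := HasSubst.of_constantCoeff_zero' hF0
  have h : F.subst F = -(F * G.subst F) := by
    have := congrArg (substAlgHom hF (R := R)) hFG
    rwa [map_neg, map_mul, substAlgHom_X, coe_substAlgHom] at this
  rw [hinv] at h
  refine X_mul_cancel ?_
  linear_combination (-1 : R⟦X⟧) * h + G.subst F * hFG

theorem subst_eq_one_add_mul_sq_of_eq_one_add_X_mul_sq {c u : R⟦X⟧}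
    (hu0 : constantCoeff u = 0) (hc : c = 1 + X * c ^ 2) :
    c.subst u = 1 + u * c.subst u ^ 2 := by
  have hu := HasSubst.of_constantCoeff_zero' hu0
  conv_lhs => rw [hc]
  rw [subst_add hu, subst_mul hu, subst_pow hu, subst_X hu, ← map_one (C (R := R)), subst_C]
  rfl

end PowerSeries

theorem stmt17_general (a b : ℚ) (c : PowerSeries ℚ)
    (hc : c = 1 + PowerSeries.X * c ^ 2)
    (Q F G : PowerSeries ℚ)
    (hQ : Q = 1 + PowerSeries.C (2 * a) * PowerSeries.X +
      PowerSeries.C b * PowerSeries.X ^ 2)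
    (hF : F = -(PowerSeries.X * Q⁻¹ *
      PowerSeries.comp c (PowerSeries.C b * PowerSeries.X ^ 2 * (Q⁻¹) ^ 2)))
    (hG : G = Q⁻¹ *
      PowerSeries.comp c (PowerSeries.C b * PowerSeries.X ^ 2 * (Q⁻¹) ^ 2)) :
    PowerSeries.comp F F = PowerSeries.X ∧ G * PowerSeries.comp G F = 1 := by
  set u : ℚ⟦X⟧ := C b * X ^ 2 * Q⁻¹ ^ 2 with hu
  have hu0 : constantCoeff u = 0 := by simp [hu]
  rw [comp_eq_subst hu0] at hF hG
  set g : ℚ⟦X⟧ := c.subst u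
  have hF0 : constantCoeff F = 0 := by simp [hF]
  have hQF : Q * F = -(X * g) := by
    rw [hF]
    linear_combination (-(X * g)) * PowerSeries.mul_inv_cancel Q (by simp [hQ])
  have hg : g = 1 + C b * F ^ 2 := by
    have hcat : g = 1 + u * g ^ 2 := subst_eq_one_add_mul_sq_of_eq_one_add_X_mul_sq hu0 hc
    rw [hcat, hF, hu]
    ring
  have hrel : X + F + X * F * (C (2 * a) + C b * (X + F)) = 0 := by
    rw [hQ] at hQF
    linear_combination hQF - X * hg
  have hinv := subst_self_eq_X_of_symmetric_relation hF0 _ _ hrel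
  rw [comp_eq_subst hF0, comp_eq_subst hF0]
  exact ⟨hinv, mul_subst_eq_one_of_eq_neg_X_mul hF0 (by rw [hF, hG]; ring) hinv⟩

/-- With `Q = 1 + 2ax + bx²`, `F = -x·Q⁻¹·c(bx²/Q²)` and `G = Q⁻¹·c(bx²/Q²)`,
the pairs `(1, F)` and `(G, F)` are Riordan involutions; `(G, F)` is the
involution defined by the orthogonal polynomial coefficient array
`(1/(1+ax+bx²), x/(1+ax+bx²))`. -/
theorem stmt17 (a b : ℚ) (c : PowerSeries ℚ)
    (hc0 : PowerSeries.constantCoeff c = 1)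
    (hc : c = 1 + PowerSeries.X * c ^ 2)
    (Q F G : PowerSeries ℚ)
    (hQ : Q = 1 + PowerSeries.C (2 * a) * PowerSeries.X +
      PowerSeries.C b * PowerSeries.X ^ 2)
    (hF : F = -(PowerSeries.X * Q⁻¹ *
      PowerSeries.comp c (PowerSeries.C b * PowerSeries.X ^ 2 * (Q⁻¹) ^ 2)))
    (hG : G = Q⁻¹ *
      PowerSeries.comp c (PowerSeries.C b * PowerSeries.X ^ 2 * (Q⁻¹) ^ 2)) :
    PowerSeries.comp F F = PowerSeries.X ∧ G * PowerSeries.comp G F = 1 :=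
  stmt17_general a b c hc Q F G hQ hF hG
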